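/- Let G be a group acting continuously on the right on a topological space M, and let P_G(M) = ⨆_{g ∈ G} P_g(M) × {g} carry the right G-action ((γ, g), h) ↦ (γ_h, h⁻¹gh) where γ_h(t) = γ(t)·h, and the ℝ-action s·(γ, k) := (s·γ, k) with (s·γ)(t) = γ(t + s − ⌊t+s⌋)·k^{⌊t+s⌋}. Then the ℝ-action descends to a well-defined continuous action of ℝ on the orbit space P_G(M)/G, and this induced action factors through the quotient group ℝ/ℤ; that is, for every (γ, k) ∈ P_G(M), the elements 1·(γ, k) and (γ, k) lie in the same G-orbit (indeed 1·(γ,k) = (γ,k)·k), so P_G(M)/G carries a natural action of the circle S¹ = ℝ/ℤ. -/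

import Mathlib

/-!
Extend a path `γ ∈ P_k(M)` to the whole line by `x ↦ γ(fract x)·k^⌊x⌋`. The boundary condition
`γ(0)·k = γ(1)` makes this twisted extension continuous (it is glued from the pieces
`γ(x - n)·k^n` on `[n, n + 1]`), and `s·γ` is the extension restricted to `[s, s + 1]`.
Translating the extension by an integer `n` multiplies it by `k^n`: this gives the action law
and `1·(γ, k) = (γ, k)·k`. The extension of `γ·h` twisted by `h⁻¹kh` is the extension of `γ`
followed by `·h`, so the rotations commute with the `G`-action and descend to the orbit space,
where `1` then acts trivially.
-/

/-- The space `P_g(M) = {γ ∈ C([0,1], M) : γ(0)·g = γ(1)}` with the compact-open topology. -/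
abbrev PSp {M G : Type*} [TopologicalSpace M] (act : M → G → M) (g : G) : Type _ :=
  {γ : C(unitInterval, M) // act (γ 0) g = γ 1}

/-- The rotation `(s·γ)(t) := γ(t + s − ⌊t + s⌋)·k^⌊t+s⌋` at the level of functions. -/
noncomputable def rotFn {M G : Type*} [Group G] (act : M → G → M) (k : G) (s : ℝ)
    (γ : unitInterval → M) : unitInterval → M :=
  fun t =>
    act (γ ⟨Int.fract ((t : ℝ) + s), Int.fract_nonneg _, (Int.fract_lt_one _).le⟩)
      (k ^ ⌊(t : ℝ) + s⌋)

/-- The orbit equivalence relation on `P_G(M) = Σ g, P_g(M)` induced by the right G-action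
`((γ, g), h) ↦ (γ_h, h⁻¹gh)` where `γ_h(t) = γ(t)·h`. -/
def rG {M G : Type*} [TopologicalSpace M] [Group G] (act : M → G → M) :
    (Σ g : G, PSp act g) → (Σ g : G, PSp act g) → Prop :=
  fun p q => ∃ h : G, q.1 = h⁻¹ * p.1 * h ∧ ∀ t, q.2.1 t = act (p.2.1 t) h

open Set Filter

theorem locallyFinite_snd_preimage_Icc_intCast (X : Type*) [TopologicalSpace X] :
    LocallyFinite fun n : ℤ => (Prod.snd ⁻¹' Icc (n : ℝ) (n + 1) : Set (X × ℝ)) :=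
  (locallyFinite_Icc_of_tendsto tendsto_intCast_atTop_atTop
    (tendsto_atBot_add_const_right _ 1 (tendsto_intCast_atBot_iff.2 tendsto_id)))
    |>.preimage_continuous continuous_snd

namespace TwistedLoop

variable {M G : Type*} [Group G] (act : M → G → M)

noncomputable def twistedExtend (k : G) (γ : unitInterval → M) (x : ℝ) : M :=
  act (γ ⟨Int.fract x, Int.fract_nonneg _, (Int.fract_lt_one _).le⟩) (k ^ ⌊x⌋)

section

variable {act} (hmul : ∀ x g h, act (act x g) h = act x (g * h))
include hmul

theorem twistedExtend_add_intCast (k : G) (γ : unitInterval → M) (x : ℝ) (n : ℤ) :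
    twistedExtend act k γ (x + n) = act (twistedExtend act k γ x) (k ^ n) := by
  simp only [twistedExtend, Int.fract_add_intCast, Int.floor_add_intCast, zpow_add, hmul]

theorem twistedExtend_add_one (k : G) (γ : unitInterval → M) (x : ℝ) :
    twistedExtend act k γ (x + 1) = act (twistedExtend act k γ x) k := by
  simpa using twistedExtend_add_intCast hmul k γ x 1

theorem twistedExtend_conj {γ δ : unitInterval → M} {h : G} (hδ : ∀ t, δ t = act (γ t) h)
    (k : G) (x : ℝ) :
    twistedExtend act (h⁻¹ * k * h) δ x = act (twistedExtend act k γ x) h := by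
  simp only [twistedExtend, hδ, hmul, ← MulAut.conj_symm_apply, ← map_zpow]
  simp [mul_assoc]

end

section

variable {act} (hone : ∀ x, act x 1 = x)
include hone

theorem twistedExtend_of_mem_Icc {k : G} {γ : unitInterval → M} (hγ : act (γ 0) k = γ 1)
    {x : ℝ} (hx : x ∈ Icc (0 : ℝ) 1) :
    twistedExtend act k γ x = γ (projIcc 0 1 zero_le_one x) := by
  rcases hx.2.lt_or_eq with hx1 | rfl
  · have hfloor : ⌊x⌋ = 0 := Int.floor_eq_zero_iff.2 ⟨hx.1, hx1⟩
    simp only [twistedExtend, Int.fract, hfloor, Int.cast_zero, sub_zero, zpow_zero, hone,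
      projIcc_of_mem _ hx]
  · simp [twistedExtend, hγ]

variable (hmul : ∀ x g h, act (act x g) h = act x (g * h))
include hmul

theorem twistedExtend_of_mem_Icc_intCast {k : G} {γ : unitInterval → M}
    (hγ : act (γ 0) k = γ 1) {n : ℤ} {x : ℝ} (hx : x ∈ Icc (n : ℝ) (n + 1)) :
    twistedExtend act k γ x = act (γ (projIcc 0 1 zero_le_one (x - n))) (k ^ n) := by
  have hx' : x - n ∈ Icc (0 : ℝ) 1 := ⟨by linarith [hx.1], by linarith [hx.2]⟩
  rw [← twistedExtend_of_mem_Icc hone hγ hx', ← twistedExtend_add_intCast hmul, sub_add_cancel]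

theorem twistedExtend_twistedExtend_add (k : G) (γ : unitInterval → M) (s x : ℝ) :
    twistedExtend act k (fun t => twistedExtend act k γ (t + s)) x
      = twistedExtend act k γ (x + s) := by
  have hx : Int.fract x + s = x + s + ((-⌊x⌋ : ℤ) : ℝ) := by
    rw [Int.fract]; push_cast; ring
  change act (twistedExtend act k γ (Int.fract x + s)) (k ^ ⌊x⌋) = _
  rw [hx, twistedExtend_add_intCast hmul, hmul, ← zpow_add, neg_add_cancel, zpow_zero, hone]

end

section

variable [TopologicalSpace M] {act} (hcont : ∀ g : G, Continuous fun x => act x g)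
  (hone : ∀ x, act x 1 = x) (hmul : ∀ x g h, act (act x g) h = act x (g * h))
include hcont hone hmul

theorem continuous_twistedExtend (k : G) :
    Continuous fun p : PSp act k × ℝ => twistedExtend act k p.1.1 p.2 := by
  refine (locallyFinite_snd_preimage_Icc_intCast _).continuous ?_
    (fun n => isClosed_Icc.preimage continuous_snd) fun n => ?_
  · exact eq_univ_of_forall fun p =>
      mem_iUnion.2 ⟨⌊p.2⌋, Int.floor_le _, (Int.lt_floor_add_one _).le⟩
  · refine ContinuousOn.congr (f := fun p : PSp act k × ℝ =>
      act (p.1.1 (projIcc 0 1 zero_le_one (p.2 - n))) (k ^ n)) ?_ fun p hp =>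
        twistedExtend_of_mem_Icc_intCast hone hmul p.1.2 hp
    fun_prop

noncomputable def rotatePath (k : G) (s : ℝ) (γ : PSp act k) : PSp act k :=
  ⟨⟨rotFn act k s γ.1,
      (continuous_twistedExtend hcont hone hmul k).comp
        (continuous_const.prodMk (continuous_subtype_val.add continuous_const))⟩, by
    change act (twistedExtend act k γ.1 ((0 : ℝ) + s)) k = twistedExtend act k γ.1 ((1 : ℝ) + s)
    rw [zero_add, add_comm, twistedExtend_add_one hmul]⟩

theorem rotatePath_apply (k : G) (s : ℝ) (γ : PSp act k) (t : unitInterval) :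
    (rotatePath hcont hone hmul k s γ).1 t = twistedExtend act k γ.1 (t + s) :=
  rfl

theorem continuous_rotatePath (k : G) (s : ℝ) : Continuous (rotatePath hcont hone hmul k s) := by
  have h : Continuous fun p : PSp act k × unitInterval => twistedExtend act k p.1.1 (p.2 + s) :=
    (continuous_twistedExtend hcont hone hmul k).comp
      (continuous_fst.prodMk ((continuous_subtype_val.comp continuous_snd).add continuous_const))
  exact (ContinuousMap.continuous_of_continuous_uncurry _ h).subtype_mk _

theorem rotatePath_zero (k : G) (γ : PSp act k) : rotatePath hcont hone hmul k 0 γ = γ := by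
  ext t
  rw [rotatePath_apply, add_zero, twistedExtend_of_mem_Icc hone γ.2 t.2, projIcc_val]

theorem rotatePath_rotatePath (k : G) (s s' : ℝ) (γ : PSp act k) :
    rotatePath hcont hone hmul k s (rotatePath hcont hone hmul k s' γ)
      = rotatePath hcont hone hmul k (s + s') γ := by
  ext t
  change twistedExtend act k (fun u => twistedExtend act k γ.1 (u + s')) (t + s)
    = twistedExtend act k γ.1 (t + (s + s'))
  rw [twistedExtend_twistedExtend_add hone hmul, add_assoc]

theorem rotatePath_one_apply (k : G) (γ : PSp act k) (t : unitInterval) :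
    (rotatePath hcont hone hmul k 1 γ).1 t = act (γ.1 t) k := by
  rw [rotatePath_apply, twistedExtend_add_one hmul, twistedExtend_of_mem_Icc hone γ.2 t.2,
    projIcc_val]

noncomputable def rotate (s : ℝ) (p : Σ g : G, PSp act g) : Σ g : G, PSp act g :=
  ⟨p.1, rotatePath hcont hone hmul p.1 s p.2⟩

theorem rG_rotate_one (p : Σ g : G, PSp act g) : rG act p (rotate hcont hone hmul 1 p) :=
  ⟨p.1, by simp [rotate], rotatePath_one_apply hcont hone hmul p.1 p.2⟩

theorem rG_rotate {p q : Σ g : G, PSp act g} (hpq : rG act p q) (s : ℝ) :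
    rG act (rotate hcont hone hmul s p) (rotate hcont hone hmul s q) := by
  obtain ⟨_, δ⟩ := q
  obtain ⟨h, rfl, hδ⟩ := hpq
  exact ⟨h, rfl, fun t => twistedExtend_conj hmul hδ p.1 _⟩

noncomputable def orbitRotate (s : ℝ) : Quot (rG act) → Quot (rG act) :=
  Quot.map (rotate hcont hone hmul s) fun _ _ hpq => rG_rotate hcont hone hmul hpq s

theorem continuous_orbitRotate (s : ℝ) : Continuous (orbitRotate hcont hone hmul s) :=
  continuous_quot_map _ <| continuous_sigma fun g =>
    continuous_sigmaMk.comp (continuous_rotatePath hcont hone hmul g s)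

theorem orbitRotate_zero (q : Quot (rG act)) : orbitRotate hcont hone hmul 0 q = q := by
  induction q using Quot.ind with
  | mk p => exact congrArg (Quot.mk _ ∘ Sigma.mk p.1) (rotatePath_zero hcont hone hmul p.1 p.2)

theorem orbitRotate_orbitRotate (s s' : ℝ) (q : Quot (rG act)) :
    orbitRotate hcont hone hmul s (orbitRotate hcont hone hmul s' q)
      = orbitRotate hcont hone hmul (s + s') q := by
  induction q using Quot.ind with
  | mk p =>
    exact congrArg (Quot.mk _ ∘ Sigma.mk p.1) (rotatePath_rotatePath hcont hone hmul p.1 s s' p.2)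

theorem orbitRotate_one (q : Quot (rG act)) : orbitRotate hcont hone hmul 1 q = q := by
  induction q using Quot.ind with
  | mk p => exact (Quot.sound (rG_rotate_one hcont hone hmul p)).symm

end

end TwistedLoop

open TwistedLoop

/-- the ℝ-action `s·(γ, k) := (s·γ, k)` on P_G(M) descends to a well-defined
continuous action of ℝ on the orbit space P_G(M)/G, and this induced action factors through
ℝ/ℤ: for every (γ, k) ∈ P_G(M), the elements 1·(γ, k) and (γ, k) lie in the same G-orbit
(indeed 1·(γ,k) = (γ,k)·k), so P_G(M)/G carries a natural action of the circle S¹ = ℝ/ℤ. -/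
theorem circle_action_on_orbit_space_of_twisted_loops
    {M G : Type*} [TopologicalSpace M] [Group G]
    (act : M → G → M)
    (hcont : ∀ g : G, Continuous fun x => act x g)
    (hone : ∀ x, act x 1 = x)
    (hmul : ∀ x g h, act (act x g) h = act x (g * h)) :
    -- S is the ℝ-action on P_G(M) = Σ g, P_g(M), given componentwise by rotFn
    ∃ S : ℝ → (Σ g : G, PSp act g) → (Σ g : G, PSp act g),
      (∀ s p, (S s p).1 = p.1) ∧
      (∀ s p t, (S s p).2.1 t = rotFn act p.1 s ⇑p.2.1 t) ∧
      -- 1·(γ,k) = (γ,k)·k : they are G-related via the element k = p.1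
      (∀ p, rG act p (S 1 p)) ∧
      -- the action descends to a well-defined continuous ℝ-action on P_G(M)/G ...
      ∃ A : ℝ → Quot (rG act) → Quot (rG act),
        (∀ s p, A s (Quot.mk _ p) = Quot.mk _ (S s p)) ∧
        (∀ s, Continuous (A s)) ∧
        (∀ q, A 0 q = q) ∧
        (∀ s s' q, A s (A s' q) = A (s + s') q) ∧
        -- ... and factors through ℝ/ℤ
        (∀ q, A 1 q = q) ∧
        (∀ s q, A (s + 1) q = A s q) := by
  refine ⟨rotate hcont hone hmul, fun _ _ => rfl, fun _ _ _ => rfl,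
    rG_rotate_one hcont hone hmul, orbitRotate hcont hone hmul, fun _ _ => rfl,
    continuous_orbitRotate hcont hone hmul, orbitRotate_zero hcont hone hmul,
    orbitRotate_orbitRotate hcont hone hmul, orbitRotate_one hcont hone hmul, fun s q => ?_⟩
  rw [← orbitRotate_orbitRotate, orbitRotate_one]
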